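/- arXiv:2403.17955 — 5 statements merged into one kernel-verified Lean document; each statement's English description precedes it below -/
import Mathlib

section
/- Let $x, y, z, m_0$ be integers with $m_0 > 0$, $z \neq 0$, $x^3 + y^3 = m_0 z^3$, and $\gcd(x, y, z) = 1$. Let $d = \gcd(12 m_0 z,\; x + y)$ (taken nonnegative). Then $d < 3^{1/3} \cdot 12 \cdot m_0^{5/2} \cdot |z|^{1/2}$. -/
private lemma only3 {n : ℕ} (_hn : n ≠ 0) (h9 : ¬ (9 ∣ n))
    (hp : ∀ p : ℕ, p.Prime → p ∣ n → p = 3) : n ∣ 3 := by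
  rcases eq_or_ne n 1 with h1 | h1
  · simp [h1]
  obtain ⟨p, pp, pd⟩ := Nat.exists_prime_and_dvd h1
  have h3 : (3 : ℕ) ∣ n := hp p pp pd ▸ pd
  obtain ⟨m, hm⟩ := h3
  rcases eq_or_ne m 1 with hm1 | hm1
  · simp [hm, hm1]
  obtain ⟨r, rp, rd⟩ := Nat.exists_prime_and_dvd hm1
  have hr : r = 3 := hp r rp (hm ▸ rd.mul_left 3)
  obtain ⟨k, hk⟩ := hr ▸ rd
  exact absurd ⟨k, by rw [hm, hk]; ring⟩ h9

private lemma rpow_pow18 (a : ℝ) (ha : 0 ≤ a) (r : ℝ) :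
    (a ^ r) ^ (18 : ℕ) = a ^ (r * 18) := by
  rw [← Real.rpow_natCast (a ^ r) 18, ← Real.rpow_mul ha]
  norm_num

theorem stmt_2 (x y z m0 : ℤ) (hm0 : 0 < m0) (hz : z ≠ 0)
    (heq : x ^ 3 + y ^ 3 = m0 * z ^ 3) (hgcd : Int.gcd x (Int.gcd y z) = 1)
    (d : ℕ) (hd : d = Int.gcd (12 * m0 * z) (x + y)) :
    (d : ℝ) < (3 : ℝ) ^ ((1 : ℝ) / 3) * 12 * (m0 : ℝ) ^ ((5 : ℝ) / 2) *
      |(z : ℝ)| ^ ((1 : ℝ) / 2) := by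
  set s : ℤ := x + y with hsdef
  set q : ℤ := x ^ 2 - x * y + y ^ 2 with hqdef
  have hsq : s * q = m0 * z ^ 3 := by rw [hsdef, hqdef]; linear_combination heq
  have hm0z : m0 * z ^ 3 ≠ 0 := mul_ne_zero hm0.ne' (pow_ne_zero 3 hz)
  have hq_ne : q ≠ 0 := fun h => hm0z (by rw [← hsq, h, mul_zero])
  have hq_pos : 0 < q := lt_of_le_of_ne (by rw [hqdef]; nlinarith [sq_nonneg (2 * x - y), sq_nonneg y]) (Ne.symm hq_ne)
  have hs_ne : s ≠ 0 := fun h => hm0z (by rw [← hsq, h, zero_mul])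
  have hs2q : s ^ 2 ≤ 4 * q := by
    rw [hsdef, hqdef]; nlinarith [sq_nonneg (x - y)]
  set M : ℕ := m0.natAbs with hMdef
  set Z : ℕ := z.natAbs with hZdef
  set S : ℕ := s.natAbs with hSdef
  set Q : ℕ := q.natAbs with hQdef
  have hMpos : 0 < M := Int.natAbs_pos.mpr hm0.ne'
  have hZpos : 0 < Z := Int.natAbs_pos.mpr hz
  have hSpos : 0 < S := Int.natAbs_pos.mpr hs_ne
  have hQpos : 0 < Q := Int.natAbs_pos.mpr hq_ne
  have hSQ : S * Q = M * Z ^ 3 := by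
    have := congrArg Int.natAbs hsq
    simpa [Int.natAbs_mul, Int.natAbs_pow] using this
  have hS2Q : S ^ 2 ≤ 4 * Q := by
    zify
    rw [Int.natCast_natAbs, Int.natCast_natAbs, sq_abs, abs_of_pos hq_pos]
    exact hs2q
  have hS3 : S ^ 3 ≤ 4 * (M * Z ^ 3) := by
    calc S ^ 3 = S * S ^ 2 := by ring
    _ ≤ S * (4 * Q) := Nat.mul_le_mul_left S hS2Q
    _ = 4 * (S * Q) := by ring
    _ = 4 * (M * Z ^ 3) := by rw [hSQ]
  -- divisibility facts for d
  have hdvd1 : (d : ℤ) ∣ 12 * m0 * z := by rw [hd]; exact Int.gcd_dvd_left _ _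
  have hdvd2 : (d : ℤ) ∣ s := by rw [hd]; exact Int.gcd_dvd_right _ _
  have hd12 : d ∣ 12 * M * Z := by
    have := Int.natAbs_dvd_natAbs.mpr hdvd1
    simpa [Int.natAbs_mul] using this
  have hdS : d ∣ S := by simpa using Int.natAbs_dvd_natAbs.mpr hdvd2
  -- the decomposition d = B * C
  set B : ℕ := Nat.gcd d (12 * M) with hBdef
  have hBd : B ∣ d := Nat.gcd_dvd_left _ _
  have hB12 : B ∣ 12 * M := Nat.gcd_dvd_right _ _
  have hBpos : 0 < B := Nat.gcd_pos_of_pos_right d (by positivity)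
  set C : ℕ := d / B with hCdef
  have hBC : B * C = d := Nat.mul_div_cancel' hBd
  have hCd : C ∣ d := ⟨B, by rw [← hBC]; ring⟩
  have hcop : Nat.Coprime C (12 * M / B) := Nat.coprime_div_gcd_div_gcd hBpos
  have hCZ : C ∣ Z := by
    have h1 : B * C ∣ B * (12 * M / B * Z) := by
      rw [hBC, ← mul_assoc, Nat.mul_div_cancel' hB12]
      exact hd12
    exact hcop.dvd_of_dvd_mul_left ((Nat.mul_dvd_mul_iff_left hBpos).mp h1)
  have hCS : C ∣ S := hCd.trans hdS
  -- key lemma from gcd(x,y,z)=1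
  have hkeyxy : ∀ p : ℕ, p.Prime → (p : ℤ) ∣ x * y → (p : ℤ) ∣ s → (p : ℤ) ∣ z → False := by
    intro p pp hxy hps hpz
    have ppz : Prime (p : ℤ) := Nat.prime_iff_prime_int.mp pp
    have hx : (p : ℤ) ∣ x ∧ (p : ℤ) ∣ y := by
      rcases ppz.dvd_mul.mp hxy with h | h
      · exact ⟨h, by simpa [hsdef] using dvd_sub hps h⟩
      · exact ⟨by simpa [hsdef] using dvd_sub hps h, h⟩
    have h1 : (p : ℤ) ∣ (Int.gcd y z : ℤ) := Int.dvd_coe_gcd hx.2 hpz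
    have h2 : (p : ℤ) ∣ (Int.gcd x (Int.gcd y z) : ℤ) := Int.dvd_coe_gcd hx.1 h1
    rw [hgcd] at h2
    have : p ∣ 1 := by exact_mod_cast h2
    exact pp.one_lt.ne' (Nat.dvd_one.mp this)
  have hq3xy : 3 * (x * y) = s ^ 2 - q := by rw [hsdef, hqdef]; ring
  have habsS : ((S : ℤ)) ∣ s := Int.natAbs_dvd.mpr dvd_rfl
  have habsQ : ((Q : ℤ)) ∣ q := Int.natAbs_dvd.mpr dvd_rfl
  have habsZ : ((Z : ℤ)) ∣ z := Int.natAbs_dvd.mpr dvd_rfl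
  have hprimeCQ : ∀ p : ℕ, p.Prime → p ∣ C → p ∣ Q → p = 3 := by
    intro p pp hpC hpQ
    have hps : (p : ℤ) ∣ s := (Int.natCast_dvd_natCast.mpr (hpC.trans hCS)).trans habsS
    have hpz : (p : ℤ) ∣ z := (Int.natCast_dvd_natCast.mpr (hpC.trans hCZ)).trans habsZ
    have hpq : (p : ℤ) ∣ q := (Int.natCast_dvd_natCast.mpr hpQ).trans habsQ
    have hp3xy : (p : ℤ) ∣ 3 * (x * y) := hq3xy ▸ dvd_sub (dvd_pow hps two_ne_zero) hpq
    have ppz : Prime (p : ℤ) := Nat.prime_iff_prime_int.mp pp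
    rcases ppz.dvd_mul.mp hp3xy with h3 | hxy
    · have : p ∣ 3 := by exact_mod_cast h3
      exact (Nat.prime_dvd_prime_iff_eq pp Nat.prime_three).mp this
    · exact (hkeyxy p pp hxy hps hpz).elim
  set g : ℕ := Nat.gcd (C ^ 3) Q with hgdef
  have hgpos : 0 < g := Nat.gcd_pos_of_pos_right _ hQpos
  have h9g : ¬ (9 ∣ g) := by
    by_cases h3C : 3 ∣ C
    · intro h9
      have h9Q : (9 : ℤ) ∣ q := by
        have : (9 : ℕ) ∣ Q := h9.trans (Nat.gcd_dvd_right _ _)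
        exact (Int.natCast_dvd_natCast.mpr this).trans habsQ
      have h3s : (3 : ℤ) ∣ s := by
        have := (Int.natCast_dvd_natCast.mpr (h3C.trans hCS)).trans habsS
        exact_mod_cast this
      have h3z : (3 : ℤ) ∣ z := by
        have := (Int.natCast_dvd_natCast.mpr (h3C.trans hCZ)).trans habsZ
        exact_mod_cast this
      have h9s2 : (9 : ℤ) ∣ s ^ 2 := by
        obtain ⟨k, hk⟩ := h3s
        exact ⟨k ^ 2, by rw [hk]; ring⟩
      have h93xy : (9 : ℤ) ∣ 3 * (x * y) := hq3xy ▸ dvd_sub h9s2 h9Q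
      have h3xy : (3 : ℤ) ∣ x * y := by
        obtain ⟨k, hk⟩ := h93xy
        exact ⟨k, by linarith⟩
      exact hkeyxy 3 Nat.prime_three (by exact_mod_cast h3xy) h3s h3z
    · intro h9
      have h3g : (3 : ℕ) ∣ g := dvd_trans (by norm_num) h9
      exact h3C (Nat.Prime.dvd_of_dvd_pow Nat.prime_three
        (h3g.trans (Nat.gcd_dvd_left _ _)))
  have hg3 : g ∣ 3 := only3 hgpos.ne' h9g (fun p pp hpg =>
    hprimeCQ p pp (pp.dvd_of_dvd_pow (hpg.trans (Nat.gcd_dvd_left _ _)))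
      (hpg.trans (Nat.gcd_dvd_right _ _)))
  have hC3SQ : C ^ 3 ∣ S * Q := by
    have h1 : C ^ 3 ∣ Z ^ 3 := pow_dvd_pow_of_dvd hCZ 3
    have h2 : Z ^ 3 ∣ S * Q := by rw [hSQ]; exact dvd_mul_left _ _
    exact h1.trans h2
  have hga : g ∣ C ^ 3 := Nat.gcd_dvd_left _ _
  have hcop2 : Nat.Coprime (C ^ 3 / g) (Q / g) := Nat.coprime_div_gcd_div_gcd hgpos
  have hC3_3S : C ^ 3 ∣ 3 * S := by
    have h1 : g * (C ^ 3 / g) ∣ g * (S * (Q / g)) := by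
      rw [Nat.mul_div_cancel' hga,
        show g * (S * (Q / g)) = S * (g * (Q / g)) by ring,
        Nat.mul_div_cancel' (Nat.gcd_dvd_right _ _)]
      exact hC3SQ
    have h2 : C ^ 3 / g ∣ S * (Q / g) := (Nat.mul_dvd_mul_iff_left hgpos).mp h1
    have h3 : C ^ 3 / g ∣ S := hcop2.dvd_of_dvd_mul_right h2
    calc C ^ 3 = g * (C ^ 3 / g) := (Nat.mul_div_cancel' hga).symm
    _ ∣ 3 * S := mul_dvd_mul hg3 h3
  -- numeric inequalities
  have hBle : B ≤ 12 * M := Nat.le_of_dvd (by positivity) hB12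
  have hdle : d ≤ 12 * M * C := by
    rw [← hBC]
    exact Nat.mul_le_mul_right C hBle
  have hC3le : C ^ 3 ≤ 3 * S := Nat.le_of_dvd (by positivity) hC3_3S
  have hdleS : d ≤ S := Nat.le_of_dvd hSpos hdS
  have hnat : d ^ 18 < 729 * 12 ^ 18 * M ^ 45 * Z ^ 9 := by
    by_cases hbig : 17 ≤ M ^ 25 * Z ^ 3
    · have hp : 0 < M ^ 20 * Z ^ 6 := by positivity
      calc d ^ 18 ≤ (12 * M * C) ^ 18 := Nat.pow_le_pow_left hdle 18
      _ = 12 ^ 18 * M ^ 18 * (C ^ 3) ^ 6 := by ring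
      _ ≤ 12 ^ 18 * M ^ 18 * (3 * S) ^ 6 :=
          Nat.mul_le_mul_left _ (Nat.pow_le_pow_left hC3le 6)
      _ = 729 * 12 ^ 18 * M ^ 18 * (S ^ 3) ^ 2 := by ring
      _ ≤ 729 * 12 ^ 18 * M ^ 18 * (4 * (M * Z ^ 3)) ^ 2 :=
          Nat.mul_le_mul_left _ (Nat.pow_le_pow_left hS3 2)
      _ = 729 * 12 ^ 18 * 16 * (M ^ 20 * Z ^ 6) := by ring
      _ < 729 * 12 ^ 18 * 17 * (M ^ 20 * Z ^ 6) :=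
          (mul_lt_mul_iff_of_pos_right hp).mpr (by norm_num)
      _ = 729 * 12 ^ 18 * (17 * (M ^ 20 * Z ^ 6)) := by ring
      _ ≤ 729 * 12 ^ 18 * (M ^ 25 * Z ^ 3 * (M ^ 20 * Z ^ 6)) :=
          Nat.mul_le_mul_left _ ((mul_le_mul_iff_of_pos_right hp).mpr hbig)
      _ = 729 * 12 ^ 18 * M ^ 45 * Z ^ 9 := by ring
    · push_neg at hbig
      have hM1 : M = 1 := by
        by_contra hM
        have h2M : 2 ≤ M := by omega
        have h1 : 2 ^ 25 ≤ M ^ 25 * Z ^ 3 :=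
          le_trans (Nat.pow_le_pow_left h2M 25) (Nat.le_mul_of_pos_right _ (by positivity))
        norm_num at h1
        omega
      have hZ2 : Z ≤ 2 := by
        by_contra hZ'
        have h3Z : 3 ≤ Z := by omega
        have h1 : 3 ^ 3 ≤ M ^ 25 * Z ^ 3 :=
          le_trans (Nat.pow_le_pow_left h3Z 3) (Nat.le_mul_of_pos_left _ (by positivity))
        norm_num at h1
        omega
      have hd18 : d ^ 18 ≤ 32 ^ 6 := by
        calc d ^ 18 ≤ S ^ 18 := Nat.pow_le_pow_left hdleS 18
        _ = (S ^ 3) ^ 6 := by ring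
        _ ≤ (4 * (M * Z ^ 3)) ^ 6 := Nat.pow_le_pow_left hS3 6
        _ ≤ (4 * (1 * 2 ^ 3)) ^ 6 := by
            apply Nat.pow_le_pow_left
            have hZ3 : Z ^ 3 ≤ 2 ^ 3 := Nat.pow_le_pow_left hZ2 3
            rw [hM1]
            omega
        _ = 32 ^ 6 := by norm_num
      have h2 : (729 : ℕ) * 12 ^ 18 ≤ 729 * 12 ^ 18 * (M ^ 45 * Z ^ 9) :=
        Nat.le_mul_of_pos_right _ (by positivity)
      have h3 : (32 : ℕ) ^ 6 < 729 * 12 ^ 18 := by norm_num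
      calc d ^ 18 ≤ 32 ^ 6 := hd18
      _ < 729 * 12 ^ 18 := h3
      _ ≤ 729 * 12 ^ 18 * (M ^ 45 * Z ^ 9) := h2
      _ = 729 * 12 ^ 18 * M ^ 45 * Z ^ 9 := by ring
  -- transfer to ℝ
  have hMcast : ((M : ℕ) : ℝ) = (m0 : ℝ) := by
    rw [hMdef, Nat.cast_natAbs, abs_of_pos (by exact_mod_cast hm0)]
  have hZcast : ((Z : ℕ) : ℝ) = |(z : ℝ)| := by rw [hZdef, Nat.cast_natAbs, Int.cast_abs]
  have hR0 : (0 : ℝ) ≤ (3 : ℝ) ^ ((1 : ℝ) / 3) * 12 * (m0 : ℝ) ^ ((5 : ℝ) / 2) *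
      |(z : ℝ)| ^ ((1 : ℝ) / 2) := by positivity
  apply lt_of_pow_lt_pow_left₀ 18 hR0
  have hm0R : (0 : ℝ) ≤ (m0 : ℝ) := by exact_mod_cast hm0.le
  have hpow : ((3 : ℝ) ^ ((1 : ℝ) / 3) * 12 * (m0 : ℝ) ^ ((5 : ℝ) / 2) *
      |(z : ℝ)| ^ ((1 : ℝ) / 2)) ^ (18 : ℕ) =
      729 * 12 ^ 18 * (m0 : ℝ) ^ (45 : ℕ) * |(z : ℝ)| ^ (9 : ℕ) := by
    rw [mul_pow, mul_pow, mul_pow, rpow_pow18 3 (by norm_num) _,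
      rpow_pow18 _ hm0R _, rpow_pow18 _ (abs_nonneg _) _]
    rw [show ((1 : ℝ) / 3 * 18) = ((6 : ℕ) : ℝ) by norm_num,
      show ((5 : ℝ) / 2 * 18) = ((45 : ℕ) : ℝ) by norm_num,
      show ((1 : ℝ) / 2 * 18) = ((9 : ℕ) : ℝ) by norm_num,
      Real.rpow_natCast, Real.rpow_natCast, Real.rpow_natCast]
    norm_num
  rw [hpow]
  calc ((d : ℝ)) ^ 18 = ((d ^ 18 : ℕ) : ℝ) := by push_cast; ring
  _ < ((729 * 12 ^ 18 * M ^ 45 * Z ^ 9 : ℕ) : ℝ) := by exact_mod_cast hnat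
  _ = 729 * 12 ^ 18 * (m0 : ℝ) ^ (45 : ℕ) * |(z : ℝ)| ^ (9 : ℕ) := by
      push_cast
      rw [hMcast, hZcast]
      norm_num
end

section
/- Let $x, y, z, m_0$ be integers with $x^3 + y^3 = m_0 z^3$, and let $d = \gcd(12 m_0 z,\; x + y)$. Then $d^3$ divides $3 \cdot 12^3 \cdot m_0^2 \cdot (x+y) \cdot x \cdot y$. -/
theorem stmt_3 (x y z m0 : ℤ) (heq : x ^ 3 + y ^ 3 = m0 * z ^ 3)
    (d : ℤ) (hd : d = Int.gcd (12 * m0 * z) (x + y)) :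
    d ^ 3 ∣ 3 * 12 ^ 3 * m0 ^ 2 * (x + y) * x * y := by
  have h1 : d ∣ 12 * m0 * z := hd ▸ Int.gcd_dvd_left _ _
  have h2 : d ∣ x + y := hd ▸ Int.gcd_dvd_right _ _
  obtain ⟨a, ha⟩ := h1
  obtain ⟨b, hb⟩ := h2
  refine ⟨12 ^ 3 * m0 ^ 2 * b ^ 3 - a ^ 3, ?_⟩
  linear_combination (1728*m0^2*((x+y)^2 + (x+y)*(d*b) + (d*b)^2)) * hb
    - ((12*m0*z)^2 + (12*m0*z)*(d*a) + (d*a)^2) * ha - 1728*m0^2 * heq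
end

section
/- Let $x, y, z, m_0$ be integers with $m_0 > 0$, $z \neq 0$, $x^3 + y^3 = m_0 z^3$, and $\gcd(x, y, z) = 1$. Let $d = \gcd(12 m_0 z,\; x + y)$. Then $d^3$ divides $3 \cdot 12^3 \cdot m_0^2 \cdot (x+y)$. -/
private lemma fac_le {m n : ℕ} (hn : n ≠ 0) (h : m ∣ n) (p : ℕ) :
    m.factorization p ≤ n.factorization p := by
  have hm : m ≠ 0 := fun h0 => hn (zero_dvd_iff.mp (h0 ▸ h))
  exact Finsupp.le_def.1 ((Nat.factorization_le_iff_dvd hm hn).2 h) p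

theorem stmt_4 (x y z m0 : ℤ) (hm0 : 0 < m0) (hz : z ≠ 0)
    (heq : x ^ 3 + y ^ 3 = m0 * z ^ 3) (hgcd : Int.gcd x (Int.gcd y z) = 1)
    (d : ℤ) (hd : d = Int.gcd (12 * m0 * z) (x + y)) :
    d ^ 3 ∣ 3 * 12 ^ 3 * m0 ^ 2 * (x + y) := by
  by_cases hS : x + y = 0
  · rw [hS]; simp
  have hdvd1 : d ∣ 12 * m0 * z := hd ▸ Int.gcd_dvd_left _ _
  have hdvd2 : d ∣ x + y := hd ▸ Int.gcd_dvd_right _ _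
  have heq' : (x + y) * (x ^ 2 - x * y + y ^ 2) = m0 * z ^ 3 := by linear_combination heq
  have hMZ : m0 * z ^ 3 ≠ 0 := mul_ne_zero (ne_of_gt hm0) (pow_ne_zero _ hz)
  have hN : x ^ 2 - x * y + y ^ 2 ≠ 0 := by
    intro h0
    rw [h0, mul_zero] at heq'
    exact hMZ heq'.symm
  have hd0 : d ≠ 0 := by
    intro h0
    rw [h0] at hdvd2
    exact hS (zero_dvd_iff.mp hdvd2)
  set D := d.natAbs with hD
  set S := (x + y).natAbs with hSdef
  set M := m0.natAbs with hM
  set Z := z.natAbs with hZ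
  set Nn := (x ^ 2 - x * y + y ^ 2).natAbs with hNn
  have hD0 : D ≠ 0 := Int.natAbs_ne_zero.mpr hd0
  have hS0 : S ≠ 0 := Int.natAbs_ne_zero.mpr hS
  have hM0 : M ≠ 0 := Int.natAbs_ne_zero.mpr (ne_of_gt hm0)
  have hZ0 : Z ≠ 0 := Int.natAbs_ne_zero.mpr hz
  have hN0 : Nn ≠ 0 := Int.natAbs_ne_zero.mpr hN
  have h5184 : (5184 : ℕ) ≠ 0 := by norm_num
  have hf1 : D ∣ 12 * M * Z := by
    have := Int.natAbs_dvd_natAbs.mpr hdvd1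
    rwa [Int.natAbs_mul, Int.natAbs_mul, show (12:ℤ).natAbs = 12 from rfl] at this
  have hf2 : D ∣ S := Int.natAbs_dvd_natAbs.mpr hdvd2
  have hfeq : S * Nn = M * Z ^ 3 := by
    have := congrArg Int.natAbs heq'
    rwa [Int.natAbs_mul, Int.natAbs_mul, Int.natAbs_pow] at this
  rw [← Int.natAbs_dvd_natAbs]
  have hrw : (3 * 12 ^ 3 * m0 ^ 2 * (x + y)).natAbs = 5184 * M ^ 2 * S := by
    rw [Int.natAbs_mul, Int.natAbs_mul, Int.natAbs_pow]
    norm_num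
    rfl
  rw [hrw, Int.natAbs_pow]
  have hMS0 : 5184 * M ^ 2 ≠ 0 := mul_ne_zero h5184 (pow_ne_zero _ hM0)
  rw [← Nat.factorization_le_iff_dvd (pow_ne_zero _ hD0) (mul_ne_zero hMS0 hS0)]
  rw [Finsupp.le_def]
  intro p
  by_cases hp : p.Prime
  swap
  · simp [Nat.factorization_eq_zero_of_not_prime _ hp]
  rw [Nat.factorization_pow, Nat.factorization_mul hMS0 hS0,
    Nat.factorization_mul h5184 (pow_ne_zero _ hM0), Nat.factorization_pow]
  simp only [Finsupp.coe_add, Finsupp.coe_smul, Pi.add_apply, Pi.smul_apply, smul_eq_mul]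
  have h5184f : (5184 : ℕ).factorization p
      = (3 : ℕ).factorization p + 3 * (12 : ℕ).factorization p := by
    rw [show (5184 : ℕ) = 3 * 12 ^ 3 by norm_num,
      Nat.factorization_mul (by norm_num) (by norm_num), Nat.factorization_pow]
    simp
  rw [h5184f]
  have ha1 : D.factorization p ≤ (12:ℕ).factorization p + M.factorization p + Z.factorization p := by
    have := fac_le (by positivity) hf1 p
    rwa [Nat.factorization_mul (mul_ne_zero (by norm_num) hM0) hZ0,
      Nat.factorization_mul (by norm_num : (12:ℕ) ≠ 0) hM0,
      Finsupp.add_apply, Finsupp.add_apply] at this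
  have ha2 : D.factorization p ≤ S.factorization p := fac_le hS0 hf2 p
  have ha3 : S.factorization p + Nn.factorization p
      = M.factorization p + 3 * Z.factorization p := by
    have := congrArg (fun n => n.factorization p) hfeq
    simpa [Nat.factorization_mul hS0 hN0, Nat.factorization_mul hM0 (pow_ne_zero _ hZ0),
      Nat.factorization_pow] using this
  rcases Nat.eq_zero_or_pos (D.factorization p) with ha0 | ha0
  · simp [ha0]
  have hpD : (p : ℤ) ∣ d := by
    rw [Int.natCast_dvd, ← hD]
    exact Nat.dvd_of_factorization_pos (by omega)
  have hpS : (p : ℤ) ∣ x + y := hpD.trans hdvd2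
  have hpZp : Prime (p : ℤ) := Nat.prime_iff_prime_int.mp hp
  by_cases hpx : (p : ℤ) ∣ x
  · have hpy : (p : ℤ) ∣ y := by
      have hy : y = (x + y) - x := by ring
      rw [hy]; exact dvd_sub hpS hpx
    have hpz : ¬ (p : ℤ) ∣ z := by
      intro h
      have h1 : (p : ℤ) ∣ ↑(Int.gcd y z) := Int.dvd_coe_gcd hpy h
      have h2 : (p : ℤ) ∣ ↑(Int.gcd x ↑(Int.gcd y z)) := Int.dvd_coe_gcd hpx h1
      rw [hgcd] at h2
      have := Int.eq_one_of_dvd_one (by norm_num) h2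
      exact hp.one_lt.ne' (by exact_mod_cast this)
    have hvz : Z.factorization p = 0 := by
      apply Nat.factorization_eq_zero_of_not_dvd
      intro h
      exact hpz (Int.natCast_dvd.mpr h)
    omega
  · have hpy : ¬ (p : ℤ) ∣ y := by
      intro h
      apply hpx
      have hx : x = (x + y) - y := by ring
      rw [hx]; exact dvd_sub hpS h
    have hvn : Nn.factorization p ≤ (3 : ℕ).factorization p := by
      by_cases hp3 : p = 3
      · subst hp3
        rw [Nat.Prime.factorization_self hp]
        by_contra hcon
        push_neg at hcon
        have h9 : (9 : ℕ) ∣ Nn := by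
          have := (Nat.Prime.pow_dvd_iff_le_factorization (k := 2) hp hN0).2 (by omega)
          simpa using this
        have h9' : ((9 : ℕ) : ℤ) ∣ x ^ 2 - x * y + y ^ 2 := Int.natCast_dvd.mpr h9
        have h9s : (9 : ℤ) ∣ (x + y) ^ 2 := by
          obtain ⟨k, hk⟩ := hpS
          exact ⟨k ^ 2, by push_cast at hk ⊢; rw [hk]; ring⟩
        have h3xy : (3 : ℤ) ∣ x * y := by
          have h93 : (9 : ℤ) ∣ 3 * (x * y) := by
            have he : 3 * (x * y) = (x + y) ^ 2 - (x ^ 2 - x * y + y ^ 2) := by ring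
            rw [he]
            exact dvd_sub h9s (by exact_mod_cast h9')
          obtain ⟨k, hk⟩ := h93
          exact ⟨k, by linarith⟩
        rcases Int.prime_three.dvd_mul.mp h3xy with h | h
        · exact hpx (by exact_mod_cast h)
        · exact hpy (by exact_mod_cast h)
      · have hv3 : (3 : ℕ).factorization p = 0 :=
          Nat.factorization_eq_zero_of_not_dvd
            (fun h => hp3 ((Nat.prime_dvd_prime_iff_eq hp (by norm_num)).mp h))
        rw [hv3, Nat.le_zero]
        apply Nat.factorization_eq_zero_of_not_dvd
        intro hdvdN
        have hpN : (p : ℤ) ∣ x ^ 2 - x * y + y ^ 2 := Int.natCast_dvd.mpr hdvdN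
        have hps : (p : ℤ) ∣ (x + y) ^ 2 := dvd_pow hpS two_ne_zero
        have h3xy : (p : ℤ) ∣ 3 * (x * y) := by
          have he : 3 * (x * y) = (x + y) ^ 2 - (x ^ 2 - x * y + y ^ 2) := by ring
          rw [he]; exact dvd_sub hps hpN
        rcases hpZp.dvd_mul.mp h3xy with h | h
        · have : p ∣ 3 := by exact_mod_cast h
          exact hp3 ((Nat.prime_dvd_prime_iff_eq hp (by norm_num)).mp this)
        · rcases hpZp.dvd_mul.mp h with h' | h'
          · exact hpx h'
          · exact hpy h'
    omega
end

section
/- Let $x, y, z, m_0$ be integers with $m_0 > 0$, $z \neq 0$, $x^3 + y^3 = m_0 z^3$, and $\gcd(x, y, z) = 1$. Let $d = \gcd(12 m_0 z,\; x + y)$ (taken nonnegative). Then $d^6 \leq (3 \cdot 12^3 \cdot m_0^2)^2 \cdot m_0 \cdot |z|^3$. -/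
theorem stmt_5 (x y z m0 : ℤ) (hm0 : 0 < m0) (hz : z ≠ 0)
    (heq : x ^ 3 + y ^ 3 = m0 * z ^ 3) (hgcd : Int.gcd x (Int.gcd y z) = 1)
    (d : ℤ) (hd : d = Int.gcd (12 * m0 * z) (x + y)) :
    d ^ 6 ≤ (3 * 12 ^ 3 * m0 ^ 2) ^ 2 * m0 * |z| ^ 3 := by
  have hm0' : m0 ≠ 0 := hm0.ne'
  have hxy : x + y ≠ 0 := by
    intro h
    have h0 : m0 * z ^ 3 = 0 := by
      have hy : y = -x := by linarith
      rw [← heq, hy]; ring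
    exact (mul_ne_zero hm0' (pow_ne_zero 3 hz)) h0
  have hsq : 0 < (x + y) ^ 2 := lt_of_le_of_ne (sq_nonneg _) (Ne.symm (pow_ne_zero 2 hxy))
  have hQpos : 0 < x ^ 2 - x * y + y ^ 2 := by nlinarith [sq_nonneg (x - y)]
  set D : ℕ := Int.gcd (12 * m0 * z) (x + y) with hDdef
  set X : ℕ := (x + y).natAbs with hXdef
  set M : ℕ := m0.natAbs with hMdef
  set Z : ℕ := z.natAbs with hZdef
  set QN : ℕ := (x ^ 2 - x * y + y ^ 2).natAbs with hQNdef
  have hX0 : X ≠ 0 := Int.natAbs_ne_zero.mpr hxy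
  have hM0 : M ≠ 0 := Int.natAbs_ne_zero.mpr hm0'
  have hZ0 : Z ≠ 0 := Int.natAbs_ne_zero.mpr hz
  have hQ0 : QN ≠ 0 := Int.natAbs_ne_zero.mpr hQpos.ne'
  have h12MZ0 : 12 * M * Z ≠ 0 := by
    exact mul_ne_zero (mul_ne_zero (by norm_num) hM0) hZ0
  have hD0 : D ≠ 0 := by
    rw [hDdef]
    intro h
    rw [Int.gcd_eq_zero_iff] at h
    exact hxy h.2
  have hdL : (D : ℤ) ∣ 12 * m0 * z := Int.gcd_dvd_left _ _
  have hdR : (D : ℤ) ∣ x + y := Int.gcd_dvd_right _ _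
  have hDX : D ∣ X := by
    have := Int.natAbs_dvd_natAbs.mpr hdR
    simpa using this
  have hDMZ : D ∣ 12 * M * Z := by
    have := Int.natAbs_dvd_natAbs.mpr hdL
    simpa [Int.natAbs_mul] using this
  have hprod : (x + y) * (x ^ 2 - x * y + y ^ 2) = m0 * z ^ 3 := by linear_combination heq
  have hEqN : X * QN = M * Z ^ 3 := by
    have := congrArg Int.natAbs hprod
    simpa [Int.natAbs_mul, Int.natAbs_pow] using this
  have hA0 : 3 * 12 ^ 3 * M ^ 2 * X ≠ 0 :=
    mul_ne_zero (mul_ne_zero (by norm_num) (pow_ne_zero _ hM0)) hX0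
  have key : D ^ 3 ∣ 3 * 12 ^ 3 * M ^ 2 * X := by
    rw [← Nat.factorization_le_iff_dvd (pow_ne_zero 3 hD0) hA0, Finsupp.le_def]
    intro p
    by_cases hp : p.Prime
    swap
    · simp [Nat.factorization_eq_zero_of_not_prime _ hp]
    -- rewrite goal
    rw [Nat.factorization_pow, Nat.factorization_mul (mul_ne_zero (by norm_num)
        (pow_ne_zero _ hM0)) hX0,
      Nat.factorization_mul (by norm_num : (3 * 12 ^ 3 : ℕ) ≠ 0) (pow_ne_zero _ hM0),
      Nat.factorization_mul (by norm_num : (3 : ℕ) ≠ 0) (by norm_num : (12 ^ 3 : ℕ) ≠ 0),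
      Nat.factorization_pow, Nat.factorization_pow]
    simp only [Finsupp.coe_add, Finsupp.coe_smul, Pi.add_apply, Pi.smul_apply, smul_eq_mul]
    -- facts
    have hDle := (Nat.factorization_le_iff_dvd hD0 h12MZ0).mpr hDMZ
    rw [Nat.factorization_mul (mul_ne_zero (by norm_num) hM0) hZ0,
      Nat.factorization_mul (by norm_num : (12 : ℕ) ≠ 0) hM0] at hDle
    have h1 := hDle p
    simp only [Finsupp.coe_add, Pi.add_apply] at h1
    have h2 := ((Nat.factorization_le_iff_dvd hD0 hX0).mpr hDX) p
    have h3' := congrArg Nat.factorization hEqN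
    rw [Nat.factorization_mul hX0 hQ0, Nat.factorization_mul hM0 (pow_ne_zero _ hZ0),
      Nat.factorization_pow] at h3'
    have h3 := DFunLike.congr_fun h3' p
    simp only [Finsupp.coe_add, Finsupp.coe_smul, Pi.add_apply, Pi.smul_apply,
      smul_eq_mul] at h3
    rcases Nat.eq_zero_or_pos (D.factorization p) with hδ | hδ
    · omega
    have hpD : p ∣ D := Nat.dvd_of_factorization_pos (by omega)
    have hpX : p ∣ X := hpD.trans hDX
    have ht1 : 1 ≤ X.factorization p := by
      have := Nat.Prime.factorization_pos_of_dvd hp hX0 hpX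
      omega
    rcases Nat.eq_zero_or_pos (Z.factorization p) with hs | hs
    · omega
    have hpZ : p ∣ Z := Nat.dvd_of_factorization_pos (by omega)
    have hpz : (p : ℤ) ∣ z := Int.natAbs_dvd_natAbs.mp (by simpa using hpZ)
    have hpxy : (p : ℤ) ∣ x + y := Int.natAbs_dvd_natAbs.mp (by simpa using hpX)
    have hpx : ¬ (p : ℤ) ∣ x := by
      intro hx
      have hy : (p : ℤ) ∣ y := (dvd_add_right hx).mp hpxy
      have hone : (p : ℤ) ∣ ((Int.gcd x (Int.gcd y z) : ℕ) : ℤ) :=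
        Int.dvd_coe_gcd hx (Int.dvd_coe_gcd hy hpz)
      rw [hgcd] at hone
      have : p ∣ 1 := by exact_mod_cast hone
      exact hp.one_lt.ne' (Nat.dvd_one.mp this)
    have hqv3 : QN.factorization p ≤ (3 : ℕ).factorization p := by
      by_cases hp3 : p = 3
      · subst hp3
        have hv3 : (3 : ℕ).factorization 3 = 1 := Nat.Prime.factorization_self (by norm_num)
        rw [hv3]
        by_contra hq
        push_neg at hq
        have h9 : (3 : ℕ) ^ 2 ∣ QN :=
          (Nat.Prime.pow_dvd_iff_le_factorization hp hQ0).mpr (by omega)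
        norm_num at h9
        have h9' : (9 : ℤ) ∣ x ^ 2 - x * y + y ^ 2 := Int.natAbs_dvd_natAbs.mp (by simpa using h9)
        have hpxy3 : (3 : ℤ) ∣ x + y := by exact_mod_cast hpxy
        have hsq9 : (9 : ℤ) ∣ (x + y) ^ 2 := by
          have := pow_dvd_pow_of_dvd hpxy3 2
          norm_num at this
          exact this
        have h3xy : (3 : ℤ) ∣ x * y := by
          have hd9 : (9 : ℤ) ∣ 3 * (x * y) := by
            have heq9 : (x + y) ^ 2 - (x ^ 2 - x * y + y ^ 2) = 3 * (x * y) := by ring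
            rw [← heq9]
            exact dvd_sub hsq9 h9'
          obtain ⟨k, hk⟩ := hd9
          exact ⟨k, by linarith⟩
        rcases (Int.prime_three.dvd_mul.mp h3xy) with h | h
        · exact hpx (by exact_mod_cast h)
        · have : (3 : ℤ) ∣ x := by
            have := dvd_sub hpxy3 h
            simpa using this
          exact hpx (by exact_mod_cast this)
      · have hnd : ¬ p ∣ QN := by
          intro hpQ
          have hpQz : (p : ℤ) ∣ x ^ 2 - x * y + y ^ 2 :=
            Int.natAbs_dvd_natAbs.mp (by simpa using hpQ)
          have h3x2 : (p : ℤ) ∣ 3 * x ^ 2 := by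
            have heq3 : x ^ 2 - x * y + y ^ 2 + (x + y) * (3 * x - (x + y)) = 3 * x ^ 2 := by
              ring
            rw [← heq3]
            exact dvd_add hpQz (hpxy.mul_right _)
          rcases (Int.Prime.dvd_mul' hp h3x2) with h | h
          · have : p ∣ 3 := by exact_mod_cast h
            exact hp3 ((Nat.prime_dvd_prime_iff_eq hp (by norm_num)).mp this)
          · exact hpx ((Nat.prime_iff_prime_int.mp hp).dvd_of_dvd_pow h)
        simp [Nat.factorization_eq_zero_of_not_dvd hnd]
    omega
  have hkey_le : D ^ 3 ≤ 3 * 12 ^ 3 * M ^ 2 * X := Nat.le_of_dvd (Nat.pos_of_ne_zero hA0) key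
  have hM1 : 1 ≤ M := Nat.pos_of_ne_zero hM0
  have hZ1 : 1 ≤ Z := Nat.pos_of_ne_zero hZ0
  have main : D ^ 6 ≤ (3 * 12 ^ 3 * M ^ 2) ^ 2 * (M * Z ^ 3) := by
    by_cases hXQ : X ≤ QN
    · have hX2 : X ^ 2 ≤ M * Z ^ 3 := by
        calc X ^ 2 = X * X := sq X
          _ ≤ X * QN := Nat.mul_le_mul_left X hXQ
          _ = M * Z ^ 3 := hEqN
      calc D ^ 6 = (D ^ 3) ^ 2 := by ring
        _ ≤ (3 * 12 ^ 3 * M ^ 2 * X) ^ 2 := Nat.pow_le_pow_left hkey_le 2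
        _ = (3 * 12 ^ 3 * M ^ 2) ^ 2 * X ^ 2 := by ring
        _ ≤ (3 * 12 ^ 3 * M ^ 2) ^ 2 * (M * Z ^ 3) := Nat.mul_le_mul_left _ hX2
    · push_neg at hXQ
      have h4Q : X ^ 2 ≤ 4 * QN := by
        have hZint : ((x + y)) ^ 2 ≤ 4 * (x ^ 2 - x * y + y ^ 2) := by
          nlinarith [sq_nonneg (x - y)]
        have hXc : (X : ℤ) = |x + y| := (Int.abs_eq_natAbs _).symm
        have hQc : (QN : ℤ) = x ^ 2 - x * y + y ^ 2 := Int.natAbs_of_nonneg hQpos.le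
        have hc : (X : ℤ) ^ 2 ≤ 4 * (QN : ℤ) := by
          rw [hXc, hQc, sq_abs]; exact hZint
        exact_mod_cast hc
      have hX4 : X ≤ 4 := by nlinarith
      have hD4 : D ≤ 4 := le_trans (Nat.le_of_dvd (Nat.pos_of_ne_zero hX0) hDX) hX4
      calc D ^ 6 ≤ 4 ^ 6 := Nat.pow_le_pow_left hD4 6
        _ ≤ (3 * 12 ^ 3 * 1 ^ 2) ^ 2 * (1 * 1 ^ 3) := by norm_num
        _ ≤ (3 * 12 ^ 3 * M ^ 2) ^ 2 * (M * Z ^ 3) := by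
          gcongr
  have hm0n : (M : ℤ) = m0 := Int.natAbs_of_nonneg hm0.le
  have hzn : (Z : ℤ) = |z| := (Int.abs_eq_natAbs z).symm
  rw [hd]
  calc ((D : ℤ)) ^ 6 = ((D ^ 6 : ℕ) : ℤ) := by push_cast; ring
    _ ≤ (((3 * 12 ^ 3 * M ^ 2) ^ 2 * (M * Z ^ 3) : ℕ) : ℤ) := by exact_mod_cast main
    _ = (3 * 12 ^ 3 * m0 ^ 2) ^ 2 * m0 * |z| ^ 3 := by push_cast [hm0n, hzn]; ring
end

section
/- Let $x, y, z, m_0$ be integers with $m_0 > 0$, $z \neq 0$, $x^3 + y^3 = m_0 z^3$, and $\gcd(x, y, z) = 1$. Let $d = \gcd(12 m_0 z,\; x + y)$ (taken positive). Then $\max\left( \frac{|12 m_0 z|}{d}, \frac{|x+y|}{d} \right) > \frac{|z|^{1/2}}{3^{1/3} \, m_0^{3/2}}$. In particular, the logarithmic height of the point $[12 m_0 z : x + y]$ of $\mathbb{P}^1(\mathbb{Q})$ is at least $\frac{1}{2} \log |z| - \frac{3}{2} \log m_0 - \frac{1}{3} \log 3$. -/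
lemma fact_le {m n : ℕ} (hm : m ≠ 0) (hn : n ≠ 0) (h : m ∣ n) (p : ℕ) :
    m.factorization p ≤ n.factorization p :=
  (Nat.factorization_le_iff_dvd hm hn).2 h p

lemma key_dvd (x y z m0 : ℤ) (hm0 : 0 < m0) (hz : z ≠ 0)
    (heq : x ^ 3 + y ^ 3 = m0 * z ^ 3) (hgcd : Int.gcd x (Int.gcd y z) = 1) :
    ((Int.gcd (12 * m0 * z) (x + y) : ℤ))^2 ∣ 72 * m0^4 * (x + y) := by
  set t : ℤ := x + y with htdef
  have ht : t ≠ 0 := by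
    intro h0
    have hy : y = -x := by linarith [h0]
    rw [hy] at heq
    have : m0 * z^3 = 0 := by linarith [heq]
    rcases mul_eq_zero.1 this with h | h
    · exact absurd h (by positivity)
    · exact hz (pow_eq_zero_iff (by norm_num) |>.1 h)
  set q : ℤ := x^2 - x*y + y^2 with hqdef
  have hq : t * q = m0 * z^3 := by rw [htdef, hqdef]; linear_combination heq
  set T := t.natAbs with hT
  set Q := q.natAbs with hQ
  set M := m0.natAbs with hM
  set Z := z.natAbs with hZ
  have hA0 : (12 * m0 * z).natAbs = 12 * M * Z := by
    rw [Int.natAbs_mul, Int.natAbs_mul]; rfl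
  have hTQ : T * Q = M * Z^3 := by
    have := congrArg Int.natAbs hq
    rwa [Int.natAbs_mul, Int.natAbs_mul, Int.natAbs_pow] at this
  have hT0 : T ≠ 0 := Int.natAbs_ne_zero.2 ht
  have hM0 : M ≠ 0 := Int.natAbs_ne_zero.2 (by positivity)
  have hZ0 : Z ≠ 0 := Int.natAbs_ne_zero.2 hz
  have hQ0 : Q ≠ 0 := by
    intro h; rw [h, mul_zero] at hTQ
    exact (mul_ne_zero hM0 (pow_ne_zero _ hZ0)) hTQ.symm
  have hA0ne : 12 * M * Z ≠ 0 := by positivity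
  set D := Nat.gcd (12 * M * Z) T with hD
  have hD0 : D ≠ 0 := Nat.gcd_ne_zero_right hT0
  have hnat : D^2 ∣ 72 * M^4 * T := by
    rw [← Nat.factorization_le_iff_dvd (pow_ne_zero _ hD0)
      (mul_ne_zero (mul_ne_zero (by norm_num) (pow_ne_zero _ hM0)) hT0)]
    intro p
    by_cases hp : p.Prime
    swap
    · simp [Nat.factorization_eq_zero_of_not_prime _ hp]
    have hfacD : (D^2).factorization p = 2 * D.factorization p := by
      rw [Nat.factorization_pow]; rfl
    have hfacR : (72 * M^4 * T).factorization p
        = (72:ℕ).factorization p + 4 * M.factorization p + T.factorization p := by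
      rw [Nat.factorization_mul (mul_ne_zero (by norm_num) (pow_ne_zero _ hM0)) hT0,
        Nat.factorization_mul (by norm_num) (pow_ne_zero _ hM0), Nat.factorization_pow]
      simp
    rw [hfacD, hfacR]
    set k := D.factorization p with hk
    have hkA : k ≤ (12 * M * Z).factorization p :=
      fact_le hD0 hA0ne (Nat.gcd_dvd_left _ _) p
    have hkT : k ≤ T.factorization p := fact_le hD0 hT0 (Nat.gcd_dvd_right _ _) p
    have hvA : (12 * M * Z).factorization p
        = (12:ℕ).factorization p + M.factorization p + Z.factorization p := by
      rw [Nat.factorization_mul (mul_ne_zero (by norm_num) hM0) hZ0,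
        Nat.factorization_mul (by norm_num) hM0]
      simp
    have h1272 : (12:ℕ).factorization p ≤ (72:ℕ).factorization p :=
      fact_le (by norm_num) (by norm_num) (by norm_num) p
    rw [hvA] at hkA
    by_cases hpZ : p ∣ Z
    swap
    · have hvZ : Z.factorization p = 0 := Nat.factorization_eq_zero_of_not_dvd hpZ
      omega
    · by_cases hk0 : k = 0
      · omega
      have hpT : p ∣ T := Nat.dvd_of_factorization_pos (by omega)
      have hptz : (p:ℤ) ∣ t := by
        rwa [← Int.natAbs_dvd_natAbs (a := (p:ℤ)), Int.natAbs_natCast]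
      have hpz : (p:ℤ) ∣ z := by
        have h' : p ∣ Z := hpZ
        rwa [← Int.natAbs_dvd_natAbs (a := (p:ℤ)), Int.natAbs_natCast]
      have hpprime : Prime (p:ℤ) := Nat.prime_iff_prime_int.1 hp
      have hone : ¬ ((p:ℤ) ∣ 1) := by
        intro h
        have := Int.le_of_dvd one_pos h
        have := hp.two_le
        omega
      have hpx : ¬ (p:ℤ) ∣ x := by
        intro hx
        have hy : (p:ℤ) ∣ y := by
          have h1 := dvd_sub hptz hx
          rwa [show t - x = y from by rw [htdef]; ring] at h1
        have : (p:ℤ) ∣ (Int.gcd x (Int.gcd y z) : ℤ) :=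
          Int.dvd_coe_gcd hx (Int.dvd_coe_gcd hy hpz)
        rw [hgcd] at this
        exact hone (by exact_mod_cast this)
      have hpy : ¬ (p:ℤ) ∣ y := by
        intro hy
        have hx : (p:ℤ) ∣ x := by
          have h1 := dvd_sub hptz hy
          rwa [show t - y = x from by rw [htdef]; ring] at h1
        exact hpx hx
      have hveq : T.factorization p + Q.factorization p
          = M.factorization p + 3 * Z.factorization p := by
        have h' := congrArg (fun n => n.factorization p) hTQ
        simpa [Nat.factorization_mul hT0 hQ0, Nat.factorization_mul hM0 (pow_ne_zero _ hZ0),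
          Nat.factorization_pow] using h'
      have hvZ1 : 1 ≤ Z.factorization p := by
        have := (Nat.Prime.factorization_pos_of_dvd hp hZ0 hpZ)
        omega
      by_cases hp3 : p = 3
      · subst hp3
        have hQ2 : ¬ (9 : ℕ) ∣ Q := by
          intro h9
          have h9q : (9:ℤ) ∣ q :=
            Int.dvd_natAbs.mp (by exact_mod_cast (Int.natCast_dvd_natCast.mpr h9))
          have h9t2 : (9:ℤ) ∣ t^2 := by
            obtain ⟨c, hc⟩ := hptz
            exact ⟨c^2, by rw [hc]; push_cast; ring⟩
          have h3xy : (3:ℤ) ∣ x * y := by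
            have h9' : (9:ℤ) ∣ 3 * (x*y) := by
              have he : t^2 - q = 3*(x*y) := by rw [htdef, hqdef]; ring
              rw [← he]; exact dvd_sub h9t2 h9q
            obtain ⟨c, hc⟩ := h9'
            exact ⟨c, by linarith⟩
          rcases (Int.Prime.dvd_mul' (by norm_num) h3xy) with h | h
          · exact hpx h
          · exact hpy h
        have hvQ : Q.factorization 3 ≤ 1 := by
          by_contra hcon
          exact hQ2 (dvd_trans (pow_dvd_pow 3 (show 2 ≤ Q.factorization 3 by omega))
            (Nat.ordProj_dvd Q 3))
        have h12 : (12:ℕ).factorization 3 = 1 := by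
          rw [show (12:ℕ) = 2^2*3 by norm_num, Nat.factorization_mul (by norm_num) (by norm_num),
            Nat.factorization_pow]
          simp [Nat.Prime.factorization (by norm_num : Nat.Prime 2),
            Nat.Prime.factorization (by norm_num : Nat.Prime 3)]
        have h72 : (72:ℕ).factorization 3 = 2 := by
          rw [show (72:ℕ) = 2^3*3^2 by norm_num, Nat.factorization_mul (by norm_num) (by norm_num),
            Nat.factorization_pow, Nat.factorization_pow]
          simp [Nat.Prime.factorization (by norm_num : Nat.Prime 2),
            Nat.Prime.factorization (by norm_num : Nat.Prime 3)]
        omega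
      · have hQnd : ¬ p ∣ Q := by
          intro hpQ
          have hpq : (p:ℤ) ∣ q := by
            rwa [← Int.natAbs_dvd_natAbs (a := (p:ℤ)), Int.natAbs_natCast]
          have h3x2 : (p:ℤ) ∣ 3 * x^2 := by
            have hfac : q - (y - 2*x) * t = 3 * x^2 := by rw [htdef, hqdef]; ring
            rw [← hfac]
            exact dvd_sub hpq (Dvd.dvd.mul_left hptz _)
          rcases hpprime.dvd_mul.1 h3x2 with h | h
          · have hd3 : p ∣ 3 := by
              rwa [← Int.natAbs_dvd_natAbs (a := (p:ℤ)), Int.natAbs_natCast] at h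
            exact hp3 ((Nat.prime_dvd_prime_iff_eq hp (by norm_num)).1 hd3)
          · exact hpx (hpprime.dvd_of_dvd_pow h)
        have hvQ : Q.factorization p = 0 := Nat.factorization_eq_zero_of_not_dvd hQnd
        have hnum : 2 * (12:ℕ).factorization p ≤ (72:ℕ).factorization p + 1 := by
          by_cases hp2 : p = 2
          · subst hp2
            have h12 : (12:ℕ).factorization 2 = 2 := by
              rw [show (12:ℕ) = 2^2*3 by norm_num,
                Nat.factorization_mul (by norm_num) (by norm_num), Nat.factorization_pow]
              simp [Nat.Prime.factorization (by norm_num : Nat.Prime 2),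
                Nat.Prime.factorization (by norm_num : Nat.Prime 3)]
            have h72 : (72:ℕ).factorization 2 = 3 := by
              rw [show (72:ℕ) = 2^3*3^2 by norm_num,
                Nat.factorization_mul (by norm_num) (by norm_num),
                Nat.factorization_pow, Nat.factorization_pow]
              simp [Nat.Prime.factorization (by norm_num : Nat.Prime 2),
                Nat.Prime.factorization (by norm_num : Nat.Prime 3)]
            omega
          · have hnd : ¬ p ∣ 12 := by
              intro hdvd
              have h12 : (12:ℕ) = 2^2*3 := by norm_num
              rw [h12] at hdvd
              rcases (Nat.Prime.dvd_mul hp).1 hdvd with h | h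
              · exact hp2 ((Nat.prime_dvd_prime_iff_eq hp (by norm_num)).1 (hp.dvd_of_dvd_pow h))
              · exact hp3 ((Nat.prime_dvd_prime_iff_eq hp (by norm_num)).1 h)
            rw [Nat.factorization_eq_zero_of_not_dvd hnd]
            omega
        omega
  -- back to ℤ
  have hcast : (Int.gcd (12 * m0 * z) t) = D := by
    rw [Int.gcd]
    congr 1
  have hDdvd : ((D:ℤ))^2 ∣ ((72 * M^4 * T : ℕ) : ℤ) := by exact_mod_cast hnat
  have habs : ((72 * M^4 * T : ℕ) : ℤ) = 72 * |m0|^4 * |t| := by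
    simp only [hM, hT]
    push_cast [Int.natCast_natAbs]
    ring
  rw [habs, abs_of_pos hm0] at hDdvd
  have : ((D:ℤ))^2 ∣ 72 * m0^4 * t :=
    hDdvd.trans (by exact mul_dvd_mul_left _ ((abs_dvd _ _).2 dvd_rfl))
  rw [hcast]
  exact this


private theorem stmt_6_aux (x y z m0 : ℤ) (hm0 : 0 < m0) (hz : z ≠ 0)
    (heq : x ^ 3 + y ^ 3 = m0 * z ^ 3) (hgcd : Int.gcd x (Int.gcd y z) = 1)
    (d : ℤ) (hd : d = Int.gcd (12 * m0 * z) (x + y))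
    (hdvd : d^2 ∣ 72 * m0^4 * (x + y)) :
    (|(z : ℝ)| ^ ((1 : ℝ) / 2)) / ((3 : ℝ) ^ ((1 : ℝ) / 3) * (m0 : ℝ) ^ ((3 : ℝ) / 2)) <
        max (|((12 * m0 * z : ℤ) : ℝ)| / (d : ℝ)) (|((x + y : ℤ) : ℝ)| / (d : ℝ)) ∧
      (1 : ℝ) / 2 * Real.log |(z : ℝ)| - 3 / 2 * Real.log (m0 : ℝ) -
          1 / 3 * Real.log 3 ≤
        Real.log (max (|((12 * m0 * z : ℤ) : ℝ)| / (d : ℝ)) (|((x + y : ℤ) : ℝ)| / (d : ℝ))) := by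
  have ht : x + y ≠ 0 := by
    intro h0
    have hy : y = -x := by linarith
    rw [hy] at heq
    have h1 : m0 * z^3 = 0 := by linarith
    rcases mul_eq_zero.1 h1 with h | h
    · exact absurd h (by positivity)
    · exact hz (pow_eq_zero_iff (by norm_num) |>.1 h)
  have hA0 : (12:ℤ) * m0 * z ≠ 0 := by
    intro h
    rcases mul_eq_zero.1 h with h | h
    · rcases mul_eq_zero.1 h with h | h
      · norm_num at h
      · exact absurd h (by positivity)
    · exact hz h
  have hdpos : (0:ℤ) < d := by
    rw [hd]
    have : Int.gcd (12 * m0 * z) (x + y) ≠ 0 := by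
      intro h
      exact hA0 ((Int.gcd_eq_zero_iff.1 h).1)
    exact_mod_cast Nat.pos_of_ne_zero this
  -- integer inequalities
  have hdle : d^2 ≤ 72 * m0^4 * |x + y| := by
    apply Int.le_of_dvd (by positivity)
    have h1 : d^2 ∣ |72 * m0^4 * (x + y)| := (dvd_abs _ _).2 hdvd
    rwa [abs_mul, abs_of_pos (show (0:ℤ) < 72*m0^4 by positivity)] at h1
  have hkey1 : 432*m0^2*|x + y|^3 ≤ |12*m0*z|^3 := by
    have h4 : 4*(12*m0*z)^3 = 1728*m0^2*((x+y)*((x+y)^2+3*(x-y)^2)) := by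
      linear_combination (-6912*m0^2)*heq
    have hP : (0:ℤ) ≤ (x+y)^2+3*(x-y)^2 := by positivity
    have hL : |4*(12*m0*z)^3| = 4*|12*m0*z|^3 := by
      rw [abs_mul, abs_pow]; norm_num
    have habsm : |m0^2| = m0^2 := abs_of_nonneg (by positivity)
    have habsP : |(x+y)^2+3*(x-y)^2| = (x+y)^2+3*(x-y)^2 := abs_of_nonneg hP
    have hR : |1728*m0^2*((x+y)*((x+y)^2+3*(x-y)^2))|
        = 1728*m0^2*(|x+y| * ((x+y)^2+3*(x-y)^2)) := by
      rw [abs_mul, abs_mul, abs_mul, habsm, habsP]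
      norm_num
    have heqabs : 4*|12*m0*z|^3 = 1728*m0^2*(|x+y| * ((x+y)^2+3*(x-y)^2)) := by
      rw [← hL, ← hR, h4]
    nlinarith [sq_abs (x+y), abs_nonneg (x+y), sq_nonneg (x-y),
      mul_nonneg (mul_nonneg (sq_nonneg m0) (abs_nonneg (x+y))) (sq_nonneg (x-y))]
  -- move to ℝ
  set A : ℝ := |((12 * m0 * z : ℤ) : ℝ)| with hAdef
  set B : ℝ := |((x + y : ℤ) : ℝ)| with hBdef
  set dR : ℝ := ((d : ℤ) : ℝ) with hdRdef
  have hdRpos : (0:ℝ) < dR := by rw [hdRdef]; exact_mod_cast hdpos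
  have hBpos : (0:ℝ) < B := by
    rw [hBdef]
    simp only [abs_pos]
    exact_mod_cast ht
  have hApos : (0:ℝ) < A := by
    rw [hAdef]
    simp only [abs_pos]
    exact_mod_cast hA0
  have hm0R : (1:ℝ) ≤ (m0:ℝ) := by exact_mod_cast hm0
  have hm0Rpos : (0:ℝ) < (m0:ℝ) := by linarith
  have hzR : (1:ℝ) ≤ |(z:ℝ)| := by
    have : (1:ℤ) ≤ |z| := Int.one_le_abs (by exact_mod_cast hz)
    calc (1:ℝ) ≤ ((|z| : ℤ) : ℝ) := by exact_mod_cast this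
    _ = |(z:ℝ)| := by push_cast; rfl
  have hzRpos : (0:ℝ) < |(z:ℝ)| := by linarith
  have hA3 : 432*(m0:ℝ)^2*B^3 ≤ A^3 := by
    rw [hAdef, hBdef]
    have := hkey1
    calc 432*(m0:ℝ)^2*|((x + y : ℤ) : ℝ)|^3 = ((432*m0^2*|x + y|^3 : ℤ) : ℝ) := by
          push_cast; ring
    _ ≤ ((|12*m0*z|^3 : ℤ) : ℝ) := by exact_mod_cast hkey1
    _ = |((12 * m0 * z : ℤ) : ℝ)|^3 := by push_cast; ring
  have hd2 : dR^2 ≤ 72*(m0:ℝ)^4*B := by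
    rw [hdRdef, hBdef]
    calc ((d:ℤ):ℝ)^2 = ((d^2 : ℤ) : ℝ) := by push_cast; ring
    _ ≤ ((72 * m0^4 * |x + y| : ℤ) : ℝ) := by exact_mod_cast hdle
    _ = 72*(m0:ℝ)^4*|((x + y : ℤ) : ℝ)| := by push_cast; ring
  have hAeq : A = 12*(m0:ℝ)*|(z:ℝ)| := by
    rw [hAdef]
    push_cast
    rw [abs_mul, abs_mul]
    rw [abs_of_nonneg (show (0:ℝ) ≤ 12 by norm_num), abs_of_nonneg (le_of_lt hm0Rpos)]
  set u : ℝ := A / dR with hudef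
  set v : ℝ := B / dR with hvdef
  have hu : 0 < u := div_pos hApos hdRpos
  have hv : 0 < v := div_pos hBpos hdRpos
  set Mx : ℝ := max u v with hMxdef
  have hMu : u ≤ Mx := le_max_left _ _
  have hMxpos : 0 < Mx := lt_of_lt_of_le hu hMu
  -- cube inequality on u, v
  have huv3 : 432*(m0:ℝ)^2*v^3 ≤ u^3 := by
    rw [hudef, hvdef, div_pow, div_pow, ← mul_div_assoc]
    gcongr
  have huv : |(z:ℝ)|/(6*(m0:ℝ)^3) ≤ u*v := by
    have h1 : u*v = A*B/dR^2 := by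
      rw [hudef, hvdef, div_mul_div_comm]; ring_nf
    have h2 : A*B/(72*(m0:ℝ)^4*B) ≤ A*B/dR^2 := by
      gcongr
    have h3 : A*B/(72*(m0:ℝ)^4*B) = |(z:ℝ)|/(6*(m0:ℝ)^3) := by
      rw [hAeq]
      field_simp
      ring
    rw [h1, ← h3]
    exact h2
  have hM6 : 2*|(z:ℝ)|^3/(m0:ℝ)^7 ≤ Mx^6 := by
    have h1 : u^6 ≤ Mx^6 := pow_le_pow_left₀ (le_of_lt hu) hMu 6
    have h2 : 432*(m0:ℝ)^2*(u*v)^3 ≤ u^6 := by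
      have : u^6 = u^3*u^3 := by ring
      rw [this]
      calc 432*(m0:ℝ)^2*(u*v)^3 = (432*(m0:ℝ)^2*v^3)*u^3 := by ring
      _ ≤ u^3*u^3 := by
          apply mul_le_mul_of_nonneg_right huv3 (by positivity)
    have h3 : 432*(m0:ℝ)^2*(|(z:ℝ)|/(6*(m0:ℝ)^3))^3 ≤ 432*(m0:ℝ)^2*(u*v)^3 := by
      gcongr
    have h4 : 432*(m0:ℝ)^2*(|(z:ℝ)|/(6*(m0:ℝ)^3))^3 = 2*|(z:ℝ)|^3/(m0:ℝ)^7 := by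
      field_simp
      ring
    linarith
  -- target quantity
  set T0 : ℝ := (|(z : ℝ)| ^ ((1 : ℝ) / 2)) / ((3 : ℝ) ^ ((1 : ℝ) / 3) * (m0 : ℝ) ^ ((3 : ℝ) / 2))
    with hT0def
  have h3pos : (0:ℝ) < (3:ℝ) ^ ((1:ℝ)/3) := Real.rpow_pos_of_pos (by norm_num) _
  have hmpow : (0:ℝ) < (m0:ℝ) ^ ((3:ℝ)/2) := Real.rpow_pos_of_pos hm0Rpos _
  have hT0pos : 0 < T0 := by
    rw [hT0def]
    exact div_pos (Real.rpow_pos_of_pos hzRpos _) (mul_pos h3pos hmpow)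
  have e1 : (|(z:ℝ)| ^ ((1:ℝ)/2))^(6:ℕ) = |(z:ℝ)|^(3:ℕ) := by
    rw [← Real.rpow_natCast (|(z:ℝ)| ^ ((1:ℝ)/2)) 6, ← Real.rpow_mul (abs_nonneg _)]
    norm_num
  have e2 : ((3:ℝ) ^ ((1:ℝ)/3))^(6:ℕ) = 9 := by
    rw [← Real.rpow_natCast ((3:ℝ) ^ ((1:ℝ)/3)) 6, ← Real.rpow_mul (by norm_num : (0:ℝ) ≤ 3)]
    norm_num
  have e3 : ((m0:ℝ) ^ ((3:ℝ)/2))^(6:ℕ) = (m0:ℝ)^(9:ℕ) := by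
    rw [← Real.rpow_natCast ((m0:ℝ) ^ ((3:ℝ)/2)) 6, ← Real.rpow_mul (le_of_lt hm0Rpos)]
    norm_num
  have hT06 : T0^6 = |(z:ℝ)|^3/(9*(m0:ℝ)^9) := by
    rw [hT0def, div_pow, mul_pow, e1, e2, e3]
  have hT6lt : T0^6 < Mx^6 := by
    rw [hT06]
    have hstep : |(z:ℝ)|^3/(9*(m0:ℝ)^9) < 2*|(z:ℝ)|^3/(m0:ℝ)^7 := by
      rw [div_lt_div_iff₀ (by positivity) (by positivity)]
      have hz3 : (1:ℝ) ≤ |(z:ℝ)|^3 := one_le_pow₀ hzR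
      have hm79 : (m0:ℝ)^7 ≤ (m0:ℝ)^9 := pow_le_pow_right₀ hm0R (by norm_num)
      nlinarith [pow_pos hm0Rpos 7, pow_pos hm0Rpos 9]
    linarith
  have hT0Mx : T0 < Mx := lt_of_pow_lt_pow_left₀ 6 (le_of_lt hMxpos) hT6lt
  constructor
  · exact hT0Mx
  · have hlog : Real.log T0 ≤ Real.log Mx := Real.log_le_log hT0pos (le_of_lt hT0Mx)
    have hlogT0 : Real.log T0
        = 1/2*Real.log |(z:ℝ)| - 3/2*Real.log (m0:ℝ) - 1/3*Real.log 3 := by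
      rw [hT0def, Real.log_div (by positivity) (by positivity),
        Real.log_mul (ne_of_gt h3pos) (ne_of_gt hmpow),
        Real.log_rpow hzRpos, Real.log_rpow (by norm_num : (0:ℝ) < 3),
        Real.log_rpow hm0Rpos]
      ring
    exact le_trans (le_of_eq hlogT0.symm) hlog

theorem stmt_6 (x y z m0 : ℤ) (hm0 : 0 < m0) (hz : z ≠ 0)
    (heq : x ^ 3 + y ^ 3 = m0 * z ^ 3) (hgcd : Int.gcd x (Int.gcd y z) = 1)
    (d : ℤ) (hd : d = Int.gcd (12 * m0 * z) (x + y)) :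
    (|(z : ℝ)| ^ ((1 : ℝ) / 2)) / ((3 : ℝ) ^ ((1 : ℝ) / 3) * (m0 : ℝ) ^ ((3 : ℝ) / 2)) <
        max (|((12 * m0 * z : ℤ) : ℝ)| / (d : ℝ)) (|((x + y : ℤ) : ℝ)| / (d : ℝ)) ∧
      (1 : ℝ) / 2 * Real.log |(z : ℝ)| - 3 / 2 * Real.log (m0 : ℝ) -
          1 / 3 * Real.log 3 ≤
        Real.log (max (|((12 * m0 * z : ℤ) : ℝ)| / (d : ℝ)) (|((x + y : ℤ) : ℝ)| / (d : ℝ))) := by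
  have hdvd : d ^ 2 ∣ 72 * m0 ^ 4 * (x + y) := by
    rw [hd]; exact key_dvd x y z m0 hm0 hz heq hgcd
  exact stmt_6_aux x y z m0 hm0 hz heq hgcd d hd hdvd
end
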